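/- arXiv:2506.20030 — 8 statements merged into one kernel-verified Lean document; each statement's English description precedes it below -/
import Mathlib

section
/- If cumulative bin probabilities satisfy Pr[u ∈ B_{≤k}] ∈ [k/M, k/M + 1/M²] for all k, then for any k ≤ j, the conditional probability Pr[u ∈ B_k | u ∈ B_{≤j}] lies in [(1 − 1/M)/(j + 1/M), (1 + 1/M)/j]. -/
open MeasureTheory ProbabilityTheory Set

/-- If cumulative bin probabilities satisfy
`Pr[u ∈ B_{≤k}] ∈ [k/M, k/M + 1/M²]` for all `k`, then for any `k ≤ j`, the conditional
probability `Pr[u ∈ B k | u ∈ B_{≤j}]` lies in `[(1 − 1/M)/(j + 1/M), (1 + 1/M)/j]`. -/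
theorem conditional_bin_probabilities
    {Ω : Type*} [MeasurableSpace Ω] (μ : Measure Ω) [IsProbabilityMeasure μ]
    (M : ℕ) (hM : 1 ≤ M)
    (u : Ω → ℝ) (hu : Measurable u)
    (B : ℕ → Set ℝ) (hB : ∀ j, MeasurableSet (B j))
    (hdisj : (Finset.Icc 1 M : Set ℕ).Pairwise (fun j k => Disjoint (B j) (B k)))
    (hcum : ∀ j ∈ Finset.Icc 1 M,
      (μ (u ⁻¹' (⋃ k ∈ Finset.Icc 1 j, B k))).toReal ∈
        Icc ((j : ℝ) / M) ((j : ℝ) / M + 1 / (M : ℝ) ^ 2)) :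
    ∀ j ∈ Finset.Icc 1 M, ∀ k ∈ Finset.Icc 1 j,
      ((μ[|u ⁻¹' (⋃ l ∈ Finset.Icc 1 j, B l)]) (u ⁻¹' B k)).toReal ∈
        Icc ((1 - 1 / (M : ℝ)) / ((j : ℝ) + 1 / (M : ℝ))) ((1 + 1 / (M : ℝ)) / (j : ℝ)) := by
  have hMpos : (0:ℝ) < M := by exact_mod_cast hM
  set f : ℕ → ℝ := fun m => (μ (u ⁻¹' (⋃ l ∈ Finset.Icc 1 m, B l))).toReal with hf
  have hS : ∀ m, MeasurableSet (u ⁻¹' (⋃ l ∈ Finset.Icc 1 m, B l)) := by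
    intro m
    exact hu (MeasurableSet.biUnion (Finset.Icc 1 m).countable_toSet (fun l _ => hB l))
  -- additivity
  have hadd : ∀ m, 1 ≤ m → m ≤ M →
      f m = f (m - 1) + (μ (u ⁻¹' B m)).toReal := by
    intro m hm1 hmM
    have hins : Finset.Icc 1 m = insert m (Finset.Icc 1 (m - 1)) := by
      ext x
      simp only [Finset.mem_Icc, Finset.mem_insert]
      omega
    have hset : u ⁻¹' (⋃ l ∈ Finset.Icc 1 m, B l)
        = u ⁻¹' B m ∪ u ⁻¹' (⋃ l ∈ Finset.Icc 1 (m-1), B l) := by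
      rw [hins]
      simp [Set.preimage_union]
    have hd : Disjoint (u ⁻¹' B m) (u ⁻¹' (⋃ l ∈ Finset.Icc 1 (m-1), B l)) := by
      apply Disjoint.preimage
      rw [Set.disjoint_iUnion₂_right]
      intro l hl
      have hl' := Finset.mem_Icc.1 hl
      have h1 : (m : ℕ) ∈ (Finset.Icc 1 M : Set ℕ) := by
        simp [Finset.mem_Icc]; omega
      have h2 : (l : ℕ) ∈ (Finset.Icc 1 M : Set ℕ) := by
        simp [Finset.mem_Icc]; omega
      exact hdisj h1 h2 (by omega)
    rw [hf]
    simp only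
    rw [hset, measure_union hd (hS (m-1)), ENNReal.toReal_add (measure_ne_top _ _) (measure_ne_top _ _)]
    ring
  have hlow : ∀ m, m ≤ M → (m : ℝ) / M ≤ f m := by
    intro m hmM
    rcases Nat.eq_zero_or_pos m with h | h
    · subst h; simp [hf]
    · exact (hcum m (Finset.mem_Icc.2 ⟨h, hmM⟩)).1
  have hhigh : ∀ m, m ≤ M → f m ≤ (m : ℝ) / M + 1 / (M : ℝ)^2 := by
    intro m hmM
    rcases Nat.eq_zero_or_pos m with h | h
    · subst h
      simp only [hf]
      norm_num
      try positivity
    · exact (hcum m (Finset.mem_Icc.2 ⟨h, hmM⟩)).2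
  intro j hj k hk
  obtain ⟨hj1, hjM⟩ := Finset.mem_Icc.1 hj
  obtain ⟨hk1, hkj⟩ := Finset.mem_Icc.1 hk
  have hkM : k ≤ M := le_trans hkj hjM
  -- value of p
  set p := (μ (u ⁻¹' B k)).toReal with hp
  have hpeq : p = f k - f (k-1) := by
    have := hadd k hk1 hkM; linarith
  have hcast : ((k-1 : ℕ) : ℝ) = (k : ℝ) - 1 := by
    push_cast [Nat.cast_sub hk1]; ring
  have hplow : 1 / (M:ℝ) - 1 / (M:ℝ)^2 ≤ p := by
    have h1 := hlow k hkM
    have h2 := hhigh (k-1) (by omega)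
    rw [hcast] at h2
    rw [hpeq]
    have : ((k:ℝ) - 1) / M = (k:ℝ)/M - 1/M := by ring
    rw [this] at h2
    linarith
  have hphigh : p ≤ 1 / (M:ℝ) + 1 / (M:ℝ)^2 := by
    have h1 := hhigh k hkM
    have h2 := hlow (k-1) (by omega)
    rw [hcast] at h2
    rw [hpeq]
    have : ((k:ℝ) - 1) / M = (k:ℝ)/M - 1/M := by ring
    rw [this] at h2
    linarith
  -- denominator
  set b := f j with hb
  have hblow : (j : ℝ) / M ≤ b := hlow j hjM
  have hbhigh : b ≤ (j : ℝ) / M + 1 / (M:ℝ)^2 := hhigh j hjM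
  have hj1R : (1:ℝ) ≤ (j:ℝ) := by exact_mod_cast hj1
  have hb0 : 0 < b := lt_of_lt_of_le (by positivity) hblow
  -- compute the conditional probability
  have hsub : u ⁻¹' B k ⊆ u ⁻¹' (⋃ l ∈ Finset.Icc 1 j, B l) := by
    apply Set.preimage_mono
    exact Set.subset_biUnion_of_mem (by exact_mod_cast hk)
  have hcond : ((μ[|u ⁻¹' (⋃ l ∈ Finset.Icc 1 j, B l)]) (u ⁻¹' B k)).toReal = p / b := by
    rw [cond_apply (hS j), Set.inter_eq_self_of_subset_right hsub,
      ENNReal.toReal_mul, ENNReal.toReal_inv]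
    rw [hp, hb, hf]
    ring
  rw [hcond]
  set q : ℝ := 1 / (M:ℝ) with hq
  have hqpos : 0 < q := by rw [hq]; positivity
  have hq1 : q ≤ 1 := by rw [hq, div_le_one hMpos]; exact_mod_cast hM
  have hq2 : 1 / (M:ℝ)^2 = q * q := by rw [hq]; ring
  have hdm : ∀ n : ℕ, (n:ℝ) / M = (n:ℝ) * q := by intro n; rw [hq]; ring
  rw [hq2] at hplow hphigh
  rw [hdm j] at hblow
  rw [hdm j, hq2] at hbhigh
  constructor
  · rw [div_le_div_iff₀ (by linarith) hb0]
    nlinarith [mul_nonneg (sub_nonneg.2 hq1) (sub_nonneg.2 hbhigh),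
      mul_nonneg (sub_nonneg.2 hplow) (by linarith : (0:ℝ) ≤ (j:ℝ) + q)]
  · rw [div_le_div_iff₀ hb0 (by linarith)]
    nlinarith [mul_nonneg (sub_nonneg.2 hphigh) (by linarith : (0:ℝ) ≤ (j:ℝ)),
      mul_nonneg (by linarith : (0:ℝ) ≤ 1 + q) (sub_nonneg.2 hblow)]
end

section
/- If cumulative bin probabilities satisfy Pr[u ∈ B_{≤k}] ∈ [k/M, k/M + 1/M²] for all k, then for each j, the conditional probability Pr[u ∈ B_j | u ∈ B_{≤j}] lies in the tighter interval [(1 − 1/M)/j, (1 + 1/M)/(j + 1/M)]. -/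
open MeasureTheory ProbabilityTheory Set

/-- If cumulative bin probabilities satisfy
`Pr[u ∈ B_{≤k}] ∈ [k/M, k/M + 1/M²]` for all `k`, then for each `j`, the conditional
probability `Pr[u ∈ B j | u ∈ B_{≤j}]` lies in the tighter interval
`[(1 − 1/M)/j, (1 + 1/M)/(j + 1/M)]`. -/
theorem conditional_bin_probabilities_diagonal
    {Ω : Type*} [MeasurableSpace Ω] (μ : Measure Ω) [IsProbabilityMeasure μ]
    (M : ℕ) (hM : 1 ≤ M)
    (u : Ω → ℝ) (hu : Measurable u)
    (B : ℕ → Set ℝ) (hB : ∀ j, MeasurableSet (B j))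
    (hdisj : (Finset.Icc 1 M : Set ℕ).Pairwise (fun j k => Disjoint (B j) (B k)))
    (hcum : ∀ j ∈ Finset.Icc 1 M,
      (μ (u ⁻¹' (⋃ k ∈ Finset.Icc 1 j, B k))).toReal ∈
        Icc ((j : ℝ) / M) ((j : ℝ) / M + 1 / (M : ℝ) ^ 2)) :
    ∀ j ∈ Finset.Icc 1 M,
      ((μ[|u ⁻¹' (⋃ l ∈ Finset.Icc 1 j, B l)]) (u ⁻¹' B j)).toReal ∈
        Icc ((1 - 1 / (M : ℝ)) / (j : ℝ)) ((1 + 1 / (M : ℝ)) / ((j : ℝ) + 1 / (M : ℝ))) := by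
  intro j hj
  rw [Finset.mem_Icc] at hj
  obtain ⟨hj1, hjM⟩ := hj
  obtain ⟨i, rfl⟩ : ∃ i, j = i + 1 := ⟨j - 1, (Nat.succ_pred_eq_of_pos hj1).symm⟩
  set S : Set ℝ := ⋃ k ∈ Finset.Icc 1 (i + 1), B k with hSdef
  set T : Set ℝ := ⋃ k ∈ Finset.Icc 1 i, B k with hTdef
  have hSm : MeasurableSet S := Finset.measurableSet_biUnion _ (fun k _ => hB k)
  have hsplit : S = T ∪ B (i + 1) := by
    rw [hSdef, hTdef]
    have : Finset.Icc 1 (i + 1) = insert (i + 1) (Finset.Icc 1 i) := by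
      ext k; simp only [Finset.mem_Icc, Finset.mem_insert]; omega
    rw [this, Finset.set_biUnion_insert, Set.union_comm]
  have hdis : Disjoint T (B (i + 1)) := by
    rw [hTdef, Set.disjoint_iUnion_left]
    intro k
    rw [Set.disjoint_iUnion_left]
    intro hk
    rw [Finset.mem_Icc] at hk
    exact hdisj (by simp [Finset.mem_Icc]; omega) (by simp [Finset.mem_Icc]; omega)
      (by omega)
  have hadd : μ (u ⁻¹' S) = μ (u ⁻¹' T) + μ (u ⁻¹' B (i + 1)) := by
    rw [hsplit, preimage_union,
      measure_union (Disjoint.preimage u hdis) (hu (hB (i + 1)))]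
  -- the conditional probability
  have hsub : u ⁻¹' B (i + 1) ⊆ u ⁻¹' S := by
    apply preimage_mono; rw [hsplit]; exact subset_union_right
  have hcond : (μ[|u ⁻¹' S]) (u ⁻¹' B (i + 1))
      = (μ (u ⁻¹' S))⁻¹ * μ (u ⁻¹' B (i + 1)) := by
    rw [cond_apply (hu hSm) μ, Set.inter_eq_self_of_subset_right hsub]
  set a := (μ (u ⁻¹' S)).toReal with ha
  set p := (μ (u ⁻¹' T)).toReal with hp
  set b := (μ (u ⁻¹' B (i + 1))).toReal with hb
  have habp : a = p + b := by
    rw [ha, hp, hb, hadd, ENNReal.toReal_add (measure_ne_top μ _) (measure_ne_top μ _)]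
  have hbnn : 0 ≤ b := ENNReal.toReal_nonneg
  have hm1 : (1 : ℝ) ≤ (M : ℝ) := by exact_mod_cast hM
  have hm0 : (0 : ℝ) < (M : ℝ) := by linarith
  have hja : (i : ℝ) + 1 ≤ (M : ℝ) := by exact_mod_cast hjM
  have hcumS := hcum (i + 1) (by rw [Finset.mem_Icc]; omega)
  rw [← hSdef] at hcumS
  obtain ⟨haL, haU⟩ := hcumS
  rw [← ha] at haL haU
  push_cast at haL haU
  have hpB : p ∈ Icc ((i : ℝ) / M) ((i : ℝ) / M + 1 / (M : ℝ) ^ 2) := by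
    rcases Nat.eq_zero_or_pos i with h0 | hpos
    · subst h0
      have : T = ∅ := by simp [hTdef]
      rw [hp, this]
      simp only [Set.preimage_empty, measure_empty, ENNReal.toReal_zero, Nat.cast_zero,
        zero_div]
      exact ⟨le_refl 0, by positivity⟩
    · have := hcum i (by rw [Finset.mem_Icc]; omega)
      rwa [← hTdef] at this
  obtain ⟨hpL, hpU⟩ := hpB
  have ha0 : 0 < a := by
    have : (0:ℝ) < ((i:ℝ)+1) / M := by positivity
    linarith
  have hgoal : ((μ[|u ⁻¹' S]) (u ⁻¹' B (i + 1))).toReal = b / a := by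
    rw [hcond, ENNReal.toReal_mul, ENNReal.toReal_inv, ← ha, ← hb, inv_mul_eq_div]
  rw [hgoal]
  have hpnn : 0 ≤ p := ENNReal.toReal_nonneg
  have hbap : b = a - p := by linarith
  have hi1 : (0:ℝ) < (i:ℝ) + 1 := by positivity
  have him : (0:ℝ) < (i:ℝ) + 1 + 1 / (M:ℝ) := by positivity
  set m : ℝ := (M : ℝ) with hmdef
  have hinn : (0:ℝ) ≤ (i:ℝ) := Nat.cast_nonneg i
  have hA1 : (i:ℝ) + 1 ≤ a * m := by
    rw [div_le_iff₀ hm0] at haL; linarith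
  have hA2 : a * (m*m) ≤ ((i:ℝ)+1) * m + 1 := by
    have h := mul_le_mul_of_nonneg_right haU (by positivity : (0:ℝ) ≤ m*m)
    calc a * (m*m) ≤ (((i:ℝ)+1)/m + 1/m^2) * (m*m) := h
      _ = ((i:ℝ)+1) * m + 1 := by field_simp
  have hP1 : (i:ℝ) ≤ p * m := by
    rw [div_le_iff₀ hm0] at hpL; linarith
  have hP2 : p * (m*m) ≤ (i:ℝ) * m + 1 := by
    have h := mul_le_mul_of_nonneg_right hpU (by positivity : (0:ℝ) ≤ m*m)
    calc p * (m*m) ≤ ((i:ℝ)/m + 1/m^2) * (m*m) := h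
      _ = (i:ℝ) * m + 1 := by field_simp
  push_cast
  constructor
  · rw [div_le_div_iff₀ hi1 ha0, ← mul_le_mul_iff_right₀ hm0, ← mul_le_mul_iff_right₀ hm0]
    have e1 : m * (m * ((1 - 1/m) * a)) = (m*m) * a - m * a := by field_simp
    have e2 : m * (m * (b * ((i:ℝ)+1))) = b * ((i:ℝ)+1) * (m*m) := by ring
    rw [e1, e2, hbap]
    nlinarith [mul_le_mul_of_nonneg_left hA1 (mul_nonneg hinn hm0.le),
      mul_le_mul_of_nonneg_left hP2 (by positivity : (0:ℝ) ≤ (i:ℝ)+1)]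
  · rw [div_le_div_iff₀ ha0 him, ← mul_le_mul_iff_right₀ hm0, ← mul_le_mul_iff_right₀ hm0]
    have e1 : m * (m * (b * ((i:ℝ)+1+1/m))) = b * ((i:ℝ)+1) * (m*m) + b * m := by
      field_simp
    have e2 : m * (m * ((1 + 1/m) * a)) = a * (m*m) + a * m := by field_simp
    rw [e1, e2, hbap]
    linarith [mul_le_mul_of_nonneg_left hA2 hinn,
      mul_le_mul_of_nonneg_left hP1 (by positivity : (0:ℝ) ≤ m*((i:ℝ)+1)+1)]
end

section
/- Let X_1,...,X_n be independent real-valued random variables, B_j and B_{≤j} measurable sets with B_j ⊆ B_{≤j}, and let u = max_i X_i. Define q = Pr[u ∈ B_j | u ∈ B_{≤j}] and q_est = Σ_i Pr[X_i ∈ B_j | X_i ∈ B_{≤j}]. Then (1 − q)·q_est ≤ q ≤ q_est, provided B_{≤j} is an interval of the form (−∞, t] and B_j = (s, t] for some s < t, so that u ∈ B_{≤j} iff all X_i ∈ B_{≤j}, and u ∈ B_j iff some X_i ∈ B_j while all X_i ∈ B_{≤j}. -/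
open MeasureTheory ProbabilityTheory Set

private lemma aux_one_sub_sum_le_prod {ι : Type*} [DecidableEq ι] (s : Finset ι) (p : ι → ℝ)
    (h0 : ∀ i ∈ s, 0 ≤ p i) (h1 : ∀ i ∈ s, p i ≤ 1) :
    1 - ∑ i ∈ s, p i ≤ ∏ i ∈ s, (1 - p i) := by
  induction s using Finset.induction with
  | empty => simp
  | insert _ _ hns ih =>
    rename_i a s'
    rw [Finset.sum_insert hns, Finset.prod_insert hns]
    have h0' : ∀ i ∈ s', 0 ≤ p i := fun i hi => h0 i (Finset.mem_insert_of_mem hi)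
    have h1' : ∀ i ∈ s', p i ≤ 1 := fun i hi => h1 i (Finset.mem_insert_of_mem hi)
    have ih' := ih h0' h1'
    have ha0 := h0 a (Finset.mem_insert_self a s')
    have ha1 := h1 a (Finset.mem_insert_self a s')
    have hsum : 0 ≤ ∑ i ∈ s', p i := Finset.sum_nonneg h0'
    nlinarith [mul_le_mul_of_nonneg_left ih' (by linarith : (0:ℝ) ≤ 1 - p a)]

private lemma aux_one_add_sum_le_prod {ι : Type*} [DecidableEq ι] (s : Finset ι) (p : ι → ℝ)
    (h0 : ∀ i ∈ s, 0 ≤ p i) :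
    1 + ∑ i ∈ s, p i ≤ ∏ i ∈ s, (1 + p i) := by
  induction s using Finset.induction with
  | empty => simp
  | insert _ _ hns ih =>
    rename_i a s'
    rw [Finset.sum_insert hns, Finset.prod_insert hns]
    have h0' : ∀ i ∈ s', 0 ≤ p i := fun i hi => h0 i (Finset.mem_insert_of_mem hi)
    have ih' := ih h0'
    have ha0 := h0 a (Finset.mem_insert_self a s')
    have hsum : 0 ≤ ∑ i ∈ s', p i := Finset.sum_nonneg h0'
    nlinarith [mul_le_mul_of_nonneg_left ih' (by linarith : (0:ℝ) ≤ 1 + p a)]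

private lemma aux_key {ι : Type*} [DecidableEq ι] (s : Finset ι) (p : ι → ℝ)
    (h0 : ∀ i ∈ s, 0 ≤ p i) (h1 : ∀ i ∈ s, p i ≤ 1) :
    (∏ i ∈ s, (1 - p i)) * (∑ i ∈ s, p i) ≤ 1 - ∏ i ∈ s, (1 - p i) ∧
      1 - ∏ i ∈ s, (1 - p i) ≤ ∑ i ∈ s, p i := by
  have hprod0 : 0 ≤ ∏ i ∈ s, (1 - p i) :=
    Finset.prod_nonneg fun i hi => by linarith [h1 i hi]
  constructor
  · have h2 : (∏ i ∈ s, (1 - p i)) * (1 + ∑ i ∈ s, p i) ≤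
        (∏ i ∈ s, (1 - p i)) * ∏ i ∈ s, (1 + p i) :=
      mul_le_mul_of_nonneg_left (aux_one_add_sum_le_prod s p h0) hprod0
    have h3 : (∏ i ∈ s, (1 - p i)) * ∏ i ∈ s, (1 + p i) = ∏ i ∈ s, (1 - p i ^ 2) := by
      rw [← Finset.prod_mul_distrib]; congr 1; ext i; ring
    have h4 : ∏ i ∈ s, (1 - p i ^ 2) ≤ 1 := by
      apply Finset.prod_le_one
      · intro i hi; nlinarith [h0 i hi, h1 i hi]
      · intro i hi; nlinarith [h0 i hi]
    nlinarith
  · linarith [aux_one_sub_sum_le_prod s p h0 h1]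

/-- For independent `X 1, ..., X n` and `u = max_i X i`, with
`B_j = (s,t]` and `B_{≤j} = (−∞,t]`, setting
`q = Pr[u ∈ B_j | u ∈ B_{≤j}]` and `q_est = Σ_i Pr[X i ∈ B_j | X i ∈ B_{≤j}]`,
we have `(1 − q)·q_est ≤ q ≤ q_est`. -/
theorem probability_estimate_bounds
    {Ω : Type*} [MeasurableSpace Ω] (μ : Measure Ω) [IsProbabilityMeasure μ]
    (n : ℕ) [NeZero n]
    (X : Fin n → Ω → ℝ) (hXm : ∀ i, Measurable (X i))
    (hindep : iIndepFun X μ)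
    (s t : ℝ) (hst : s < t)
    (u : Ω → ℝ) (hu : u = fun ω => Finset.univ.sup' Finset.univ_nonempty (fun i => X i ω))
    (hpos : μ {ω | u ω ∈ Iic t} ≠ 0)
    (hposi : ∀ i, μ {ω | X i ω ∈ Iic t} ≠ 0)
    (q q_est : ℝ)
    (hq : q = ((μ[|{ω | u ω ∈ Iic t}]) {ω | u ω ∈ Ioc s t}).toReal)
    (hq_est : q_est = ∑ i, ((μ[|{ω | X i ω ∈ Iic t}]) {ω | X i ω ∈ Ioc s t}).toReal) :
    (1 - q) * q_est ≤ q ∧ q ≤ q_est := by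
  -- notation
  set a : Fin n → ENNReal := fun i => μ {ω | X i ω ∈ Iic s} with ha
  set b : Fin n → ENNReal := fun i => μ {ω | X i ω ∈ Iic t} with hb
  -- basic set identities
  have hset : ∀ r : ℝ, {ω | u ω ∈ Iic r} = ⋂ i, {ω | X i ω ∈ Iic r} := by
    intro r; ext ω; simp [hu, Finset.sup'_le_iff]
  have hMi : ∀ (i : Fin n) (r : ℝ), MeasurableSet {ω | X i ω ∈ Iic r} :=
    fun i r => hXm i measurableSet_Iic
  have hMu : ∀ r : ℝ, MeasurableSet {ω | u ω ∈ Iic r} := by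
    intro r; rw [hset]; exact MeasurableSet.iInter fun i => hMi i r
  have hprodm : ∀ r : ℝ, μ {ω | u ω ∈ Iic r} = ∏ i, μ {ω | X i ω ∈ Iic r} := by
    intro r
    rw [hset]
    exact hindep.meas_iInter fun i => ⟨Iic r, measurableSet_Iic, rfl⟩
  -- Ioc as difference
  have hIoc : ∀ f : Ω → ℝ, {ω | f ω ∈ Ioc s t} = {ω | f ω ∈ Iic t} \ {ω | f ω ∈ Iic s} := by
    intro f
    have : {ω | f ω ∈ Ioc s t} = f ⁻¹' Ioc s t := rfl
    rw [this, ← Iic_sdiff_Iic, Set.preimage_diff]; rfl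
  -- fineness facts
  have hfin : ∀ A : Set Ω, μ A ≠ ⊤ := fun A => measure_ne_top μ A
  -- generic conditional computation
  have hcond : ∀ (f : Ω → ℝ), MeasurableSet {ω | f ω ∈ Iic s} →
      MeasurableSet {ω | f ω ∈ Iic t} → μ {ω | f ω ∈ Iic t} ≠ 0 →
      ((μ[|{ω | f ω ∈ Iic t}]) {ω | f ω ∈ Ioc s t}).toReal =
        1 - (μ {ω | f ω ∈ Iic s}).toReal / (μ {ω | f ω ∈ Iic t}).toReal := by
    intro f hms hmt hne
    have hsub : {ω | f ω ∈ Iic s} ⊆ {ω | f ω ∈ Iic t} := by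
      intro ω hω; exact le_trans hω hst.le
    have hsub2 : {ω | f ω ∈ Ioc s t} ⊆ {ω | f ω ∈ Iic t} := fun ω hω => hω.2
    rw [cond_apply hmt, Set.inter_eq_self_of_subset_right hsub2, hIoc f,
      measure_diff hsub hms.nullMeasurableSet (hfin _),
      ENNReal.toReal_mul, ENNReal.toReal_inv,
      ENNReal.toReal_sub_of_le (measure_mono hsub) (hfin _)]
    have hbt : (μ {ω | f ω ∈ Iic t}).toReal ≠ 0 :=
      (ENNReal.toReal_ne_zero).mpr ⟨hne, hfin _⟩
    rw [inv_mul_eq_div, sub_div, div_self hbt]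
  -- real versions
  set p : Fin n → ℝ := fun i => 1 - (a i).toReal / (b i).toReal with hp
  have hb0 : ∀ i, 0 < (b i).toReal := fun i => ENNReal.toReal_pos (hposi i) (hfin _)
  have hab : ∀ i, (a i).toReal ≤ (b i).toReal := fun i =>
    ENNReal.toReal_mono (hfin _) (measure_mono fun ω hω => le_trans hω hst.le)
  have hp0 : ∀ i ∈ (Finset.univ : Finset (Fin n)), 0 ≤ p i := by
    intro i _
    have := div_le_one_of_le₀ (hab i) (hb0 i).le
    simp only [hp]; linarith
  have hp1 : ∀ i ∈ (Finset.univ : Finset (Fin n)), p i ≤ 1 := by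
    intro i _
    have : 0 ≤ (a i).toReal / (b i).toReal :=
      div_nonneg ENNReal.toReal_nonneg ENNReal.toReal_nonneg
    simp only [hp]; linarith
  -- q_est = ∑ p
  have hq_est' : q_est = ∑ i, p i := by
    rw [hq_est]
    refine Finset.sum_congr rfl fun i _ => ?_
    exact hcond (X i) (hMi i s) (hMi i t) (hposi i)
  -- 1 - p i = a i / b i, so ∏ (1 - p i) = (∏ a).toReal / (∏ b).toReal
  have hprodp : ∏ i, (1 - p i) = (μ {ω | u ω ∈ Iic s}).toReal / (μ {ω | u ω ∈ Iic t}).toReal := by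
    have h1 : ∏ i, (1 - p i) = (∏ i, (a i).toReal) / (∏ i, (b i).toReal) := by
      rw [← Finset.prod_div_distrib]
      refine Finset.prod_congr rfl fun i _ => by simp [hp]
    rw [h1, hprodm s, hprodm t, ENNReal.toReal_prod, ENNReal.toReal_prod]
  -- q = 1 - ∏ (1 - p i)
  have hq' : q = 1 - ∏ i, (1 - p i) := by
    rw [hq, hcond u (hMu s) (hMu t) hpos, hprodp]
  obtain ⟨h1, h2⟩ := aux_key Finset.univ p hp0 hp1
  constructor
  · rw [hq', hq_est']
    have : 1 - (1 - ∏ i, (1 - p i)) = ∏ i, (1 - p i) := by ring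
    rw [this]; exact h1
  · rw [hq', hq_est']; exact h2
end

section
/- Let M ≥ 2 be an integer and suppose real numbers q_j for j ∈ {1,...,M} satisfy q_j ≤ (1 + 1/M)/(j − 1) + 1/M² for all j ≥ 2 and q_j ∈ [0,1]. Then for every j with 6 ≤ j ≤ M, the product ∏_{k=j}^{M} (1 − q_k) is at least (j − 5)/(M − 1). -/
/-- If `M ≥ 2` and real numbers `q j` for `j ∈ {1,...,M}` satisfy `q j ∈ [0,1]`
and `q j ≤ (1 + 1/M)/(j − 1) + 1/M²` for all `j ≥ 2`, then for every `j` with `6 ≤ j ≤ M`,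
`∏_{k=j}^{M} (1 − q k) ≥ (j − 5)/(M − 1)`. -/
theorem product_lower_bound
    (M : ℕ) (hM : 2 ≤ M) (q : ℕ → ℝ)
    (hq01 : ∀ j, 1 ≤ j → j ≤ M → q j ∈ Set.Icc (0 : ℝ) 1)
    (hub : ∀ j, 2 ≤ j → j ≤ M →
      q j ≤ (1 + 1 / (M : ℝ)) / ((j : ℝ) - 1) + 1 / (M : ℝ) ^ 2) :
    ∀ j, 6 ≤ j → j ≤ M →
      ((j : ℝ) - 5) / ((M : ℝ) - 1) ≤ ∏ k ∈ Finset.Icc j M, (1 - q k) := by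
  suffices h : ∀ d j, 6 ≤ j → j ≤ M + 1 → M + 1 - j = d →
      ((j : ℝ) - 5) / ((M : ℝ) - 1) ≤ ∏ k ∈ Finset.Icc j M, (1 - q k) by
    intro j hj hjM
    exact h (M + 1 - j) j hj (by omega) rfl
  intro d
  induction d with
  | zero =>
    intro j hj hjM hd
    have hjM' : j = M + 1 := by omega
    subst hjM'
    rw [Finset.Icc_eq_empty (by omega), Finset.prod_empty]
    have hM1 : (1 : ℝ) < (M : ℝ) := by
      have : (2 : ℝ) ≤ (M : ℝ) := by exact_mod_cast hM
      linarith
    rw [div_le_one (by linarith)]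
    push_cast
    linarith
  | succ d ih =>
    intro j hj hjM hd
    have hjM' : j ≤ M := by omega
    have hM6 : 6 ≤ M := by omega
    -- split product
    rw [show Finset.Icc j M = Finset.Ico j (M + 1) by rw [Finset.Ico_add_one_right_eq_Icc],
      Finset.prod_eq_prod_Ico_succ_bot (by omega)]
    rw [Finset.Ico_add_one_right_eq_Icc]
    have hprev := ih (j + 1) (by omega) (by omega) (by omega)
    -- real casts
    have ha6 : (6 : ℝ) ≤ (j : ℝ) := by exact_mod_cast hj
    have ham : (j : ℝ) ≤ (M : ℝ) := by exact_mod_cast hjM'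
    have hm6 : (6 : ℝ) ≤ (M : ℝ) := by exact_mod_cast hM6
    have hm1 : (0 : ℝ) < (M : ℝ) - 1 := by linarith
    -- bound on q j
    have hq := hub j (by omega) hjM'
    have hq0 := (hq01 j (by omega) hjM').1
    have hj1 : (0:ℝ) < (j:ℝ) - 1 := by linarith
    have hj4 : (0:ℝ) < (j:ℝ) - 4 := by linarith
    have hm0 : (0 : ℝ) < (M : ℝ) := by linarith
    have hkey : q j ≤ 1 / ((j : ℝ) - 4) := by
      refine hq.trans ?_
      rw [div_add_div _ _ (ne_of_gt hj1) (by positivity), div_le_div_iff₀ (by positivity) hj4]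
      have hexp : ((1 + 1/(M:ℝ)) * (M:ℝ)^2 + ((j:ℝ)-1)) * ((j:ℝ)-4)
          = (M:ℝ)^2 * ((j:ℝ)-4) + (M:ℝ)*((j:ℝ)-4) + ((j:ℝ)-1)*((j:ℝ)-4) := by
        field_simp
      rw [mul_one, hexp, one_mul]
      nlinarith [mul_nonneg (by linarith : (0:ℝ) ≤ (M:ℝ) - (j:ℝ)) (by linarith : (0:ℝ) ≤ (j:ℝ) - 4),
        mul_nonneg (by linarith : (0:ℝ) ≤ (M:ℝ) - ((j:ℝ)-1)) (by linarith : (0:ℝ) ≤ (j:ℝ) - 4),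
        mul_nonneg (by linarith : (0:ℝ) ≤ (M:ℝ)) (by linarith : (0:ℝ) ≤ (M:ℝ) - ((j:ℝ)-4))]
    have hq1 : q j ≤ 1 := (hq01 j (by omega) hjM').2
    have hfac : (0 : ℝ) ≤ 1 - q j := by
      have h14 : (1 : ℝ) / ((j:ℝ) - 4) ≤ 1 := by
        rw [div_le_one hj4]; linarith
      linarith
    have h1 : q j * ((j:ℝ) - 4) ≤ 1 := (le_div_iff₀ hj4).mp hkey
    calc ((j : ℝ) - 5) / ((M : ℝ) - 1)
        ≤ (1 - q j) * (((j:ℝ) + 1 - 5) / ((M:ℝ) - 1)) := by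
          rw [mul_div_assoc', div_le_div_iff₀ hm1 hm1]
          nlinarith
      _ ≤ (1 - q j) * ∏ k ∈ Finset.Icc (j+1) M, (1 - q k) := by
          apply mul_le_mul_of_nonneg_left _ hfac
          convert hprev using 2
          · rfl
          push_cast; ring
end

section
/- Let v and b be independent real-valued random variables with v ≥ 0. For any threshold U with Pr[v + b ≤ U] > 0, E[v | v + b ≤ U] ≤ E[v]. -/
open MeasureTheory ProbabilityTheory

/-- Chebyshev association inequality, special case:
`E[x · 1_{x ≤ s}] ≤ P(x ≤ s) · E[x]`. -/
lemma key_one_dim (ν : Measure ℝ) [IsProbabilityMeasure ν]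
    (hint : Integrable id ν) (s : ℝ) :
    ∫ x in {x : ℝ | x ≤ s}, x ∂ν ≤ (ν {x : ℝ | x ≤ s}).toReal * ∫ x, x ∂ν := by
  have hA : MeasurableSet {x : ℝ | x ≤ s} := measurableSet_Iic
  set A : Set ℝ := {x | x ≤ s} with hAdef
  have h1 : ∫ x in A, x ∂ν ≤ (ν A).toReal * s := by
    calc ∫ x in A, x ∂ν ≤ ∫ _x in A, s ∂ν :=
          setIntegral_mono_on hint.integrableOn (integrableOn_const (measure_ne_top ν A))
            hA (fun x hx => hx)
      _ = (ν A).toReal * s := by rw [setIntegral_const]; simp [smul_eq_mul, Measure.real]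
  have h2 : (ν Aᶜ).toReal * s ≤ ∫ x in Aᶜ, x ∂ν := by
    calc (ν Aᶜ).toReal * s = ∫ _x in Aᶜ, s ∂ν := by rw [setIntegral_const]; simp [smul_eq_mul, Measure.real]
      _ ≤ ∫ x in Aᶜ, x ∂ν :=
          setIntegral_mono_on (integrableOn_const (measure_ne_top ν Aᶜ))
            hint.integrableOn hA.compl (fun x hx => le_of_lt (lt_of_not_ge hx))
  have hadd : ∫ x in A, x ∂ν + ∫ x in Aᶜ, x ∂ν = ∫ x, x ∂ν := by
    simpa using integral_add_compl hA hint
  have hp : (ν A).toReal + (ν Aᶜ).toReal = 1 := by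
    rw [← ENNReal.toReal_add (measure_ne_top ν A) (measure_ne_top ν Aᶜ),
      measure_add_measure_compl hA]
    simp
  have hp0 : 0 ≤ (ν A).toReal := ENNReal.toReal_nonneg
  have hq0 : 0 ≤ (ν Aᶜ).toReal := ENNReal.toReal_nonneg
  have h3 : (∫ x in A, x ∂ν) * (ν Aᶜ).toReal ≤ (∫ x in Aᶜ, x ∂ν) * (ν A).toReal := by
    calc (∫ x in A, x ∂ν) * (ν Aᶜ).toReal ≤ ((ν A).toReal * s) * (ν Aᶜ).toReal :=
          mul_le_mul_of_nonneg_right h1 hq0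
      _ = ((ν Aᶜ).toReal * s) * (ν A).toReal := by ring
      _ ≤ (∫ x in Aᶜ, x ∂ν) * (ν A).toReal := mul_le_mul_of_nonneg_right h2 hp0
  have hq : (ν Aᶜ).toReal = 1 - (ν A).toReal := by linarith
  rw [hq] at h3
  rw [← hadd]
  nlinarith [h3]

/-- If `v ≥ 0` and `b` are independent real random variables with `v`
integrable, then for any threshold `U` with `Pr[v + b ≤ U] > 0`,
`E[v | v + b ≤ U] ≤ E[v]`. -/
theorem random_bias_local_alignment
    {Ω : Type*} [MeasurableSpace Ω] (μ : Measure Ω) [IsProbabilityMeasure μ]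
    (v b : Ω → ℝ) (hv : Measurable v) (hb : Measurable b)
    (hvnn : ∀ ω, 0 ≤ v ω) (hvint : Integrable v μ)
    (hindep : IndepFun v b μ)
    (U : ℝ) (hpos : μ {ω | v ω + b ω ≤ U} ≠ 0) :
    (∫ ω, v ω ∂(μ[|{ω | v ω + b ω ≤ U}])) ≤ ∫ ω, v ω ∂μ := by
  classical
  set A : Set Ω := {ω | v ω + b ω ≤ U} with hAdef
  have hA : MeasurableSet A := measurableSet_le (hv.add hb) measurable_const
  set ν : Measure ℝ := μ.map v with hν
  set ρ : Measure ℝ := μ.map b with hρ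
  have : IsProbabilityMeasure ν := Measure.isProbabilityMeasure_map hv.aemeasurable
  have : IsProbabilityMeasure ρ := Measure.isProbabilityMeasure_map hb.aemeasurable
  have hpair : Measurable fun ω => (v ω, b ω) := hv.prodMk hb
  have hmap : μ.map (fun ω => (v ω, b ω)) = ν.prod ρ :=
    (indepFun_iff_map_prod_eq_prod_map_map hv.aemeasurable hb.aemeasurable).1 hindep
  set S : Set (ℝ × ℝ) := {p : ℝ × ℝ | p.1 + p.2 ≤ U} with hSdef
  have hS : MeasurableSet S := measurableSet_le (measurable_fst.add measurable_snd) measurable_const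
  -- integrability of `id` w.r.t. ν and the value of its integral
  have hνint : Integrable (id : ℝ → ℝ) ν := by
    rw [hν, integrable_map_measure aestronglyMeasurable_id hv.aemeasurable]
    exact hvint
  have hI : ∫ x, x ∂ν = ∫ ω, v ω ∂μ := by
    rw [hν]
    simpa using integral_map hv.aemeasurable (aestronglyMeasurable_id (μ := μ.map v))
  set I : ℝ := ∫ ω, v ω ∂μ with hIdef
  have hInn : 0 ≤ I := integral_nonneg hvnn
  -- the indicator function on the product space
  set g : ℝ × ℝ → ℝ := S.indicator (fun p => p.1) with hg
  have hgsm : StronglyMeasurable g := (measurable_fst.indicator hS).stronglyMeasurable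
  have hgint : Integrable g (ν.prod ρ) := by
    have hfst : Integrable (fun p : ℝ × ℝ => p.1) (ν.prod ρ) := by
      have : Integrable (id : ℝ → ℝ) ((ν.prod ρ).map Prod.fst) := by
        rw [show (ν.prod ρ).map Prod.fst = ν from Measure.fst_prod]
        exact hνint
      simpa using this.comp_measurable measurable_fst
    refine hfst.norm.mono' hgsm.aestronglyMeasurable ?_
    filter_upwards with p
    exact norm_indicator_le_norm_self (s := S) (f := fun p : ℝ × ℝ => p.1) (a := p)
  -- key computation : ∫_A v ∂μ ≤ (μ A).toReal * I
  have hμA : μ A = (ν.prod ρ) S := by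
    rw [← hmap, Measure.map_apply hpair hS]
    rfl
  have hkey : ∫ ω in A, v ω ∂μ ≤ (μ A).toReal * I := by
    have e1 : ∫ ω in A, v ω ∂μ = ∫ ω, g (v ω, b ω) ∂μ := by
      rw [← integral_indicator hA]
      congr 1
    have e2 : ∫ ω, g (v ω, b ω) ∂μ = ∫ p, g p ∂(ν.prod ρ) := by
      rw [← hmap, integral_map hpair.aemeasurable hgsm.aestronglyMeasurable]
    have e3 : ∫ p, g p ∂(ν.prod ρ) = ∫ y, ∫ x, g (x, y) ∂ν ∂ρ :=
      integral_prod_symm g hgint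
    have hsec : ∀ y : ℝ, (fun x => g (x, y)) = Set.indicator {x : ℝ | x ≤ U - y} id := by
      intro y
      funext x
      simp only [hg, hSdef, Set.indicator_apply, Set.mem_setOf_eq, le_sub_iff_add_le, id_eq]
    have e4 : ∀ y : ℝ, ∫ x, g (x, y) ∂ν ≤ (ν {x : ℝ | x ≤ U - y}).toReal * I := by
      intro y
      have hIic : MeasurableSet {x : ℝ | x ≤ U - y} :=
        measurableSet_le measurable_id measurable_const
      have : ∫ x, g (x, y) ∂ν = ∫ x in {x : ℝ | x ≤ U - y}, x ∂ν := by
        rw [hsec y]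
        exact integral_indicator hIic
      rw [this, ← hI]
      exact key_one_dim ν hνint (U - y)
    have e4' : ∀ y : ℝ, 0 ≤ ∫ x, g (x, y) ∂ν := by
      intro y
      rw [hsec y]
      apply integral_nonneg_of_ae
      have hvnn' : ∀ᵐ x ∂ν, 0 ≤ x := by
        rw [hν, ae_map_iff hv.aemeasurable measurableSet_Ici]
        filter_upwards with ω using hvnn ω
      filter_upwards [hvnn'] with x hx
      exact Set.indicator_nonneg (fun _ _ => hx) x
    -- integrability of the bound
    have hbm : Measurable fun y : ℝ => (ν ((fun x => (x, y)) ⁻¹' S)).toReal :=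
      (measurable_measure_prodMk_right hS).ennreal_toReal
    have hpre : ∀ y : ℝ, (fun x => (x, y)) ⁻¹' S = {x : ℝ | x ≤ U - y} := by
      intro y
      ext x
      simp [hSdef, le_sub_iff_add_le]
    have hbint : Integrable (fun y : ℝ => (ν {x : ℝ | x ≤ U - y}).toReal * I) ρ := by
      refine (integrable_const I).mono' ?_ ?_
      · exact ((by simpa [hpre] using hbm : Measurable fun y : ℝ =>
          (ν {x : ℝ | x ≤ U - y}).toReal).mul_const I).aestronglyMeasurable
      · filter_upwards with y
        rw [Real.norm_eq_abs, abs_mul, abs_of_nonneg ENNReal.toReal_nonneg,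
          abs_of_nonneg hInn]
        refine mul_le_of_le_one_left hInn ?_
        simpa using ENNReal.toReal_mono ENNReal.one_ne_top prob_le_one
    have e5 : ∫ y, (ν {x : ℝ | x ≤ U - y}).toReal * I ∂ρ = (μ A).toReal * I := by
      rw [integral_mul_const]
      congr 1
      have : ∫ y, (ν {x : ℝ | x ≤ U - y}).toReal ∂ρ
          = (∫⁻ y, ν {x : ℝ | x ≤ U - y} ∂ρ).toReal := by
        refine integral_toReal ?_ ?_
        · exact (by simpa [hpre] using (measurable_measure_prodMk_right hS) :
            Measurable fun y : ℝ => ν {x : ℝ | x ≤ U - y}).aemeasurable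
        · filter_upwards with y using lt_of_le_of_lt prob_le_one ENNReal.one_lt_top
      rw [this, hμA, Measure.prod_apply_symm hS]
      simp_rw [hpre]
    calc ∫ ω in A, v ω ∂μ = ∫ y, ∫ x, g (x, y) ∂ν ∂ρ := by rw [e1, e2, e3]
      _ ≤ ∫ y, (ν {x : ℝ | x ≤ U - y}).toReal * I ∂ρ := by
          refine integral_mono_of_nonneg ?_ hbint ?_
          · filter_upwards with y using e4' y
          · filter_upwards with y using e4 y
      _ = (μ A).toReal * I := e5
  -- finish : unfold the conditional measure
  rw [show μ[|A] = (μ A)⁻¹ • μ.restrict A from rfl, integral_smul_measure, smul_eq_mul]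
  have hμA1 : μ A ≠ ⊤ := measure_ne_top μ A
  have hpos' : 0 < (μ A).toReal := ENNReal.toReal_pos hpos hμA1
  rw [ENNReal.toReal_inv]
  calc (μ A).toReal⁻¹ * ∫ ω in A, v ω ∂μ
      ≤ (μ A).toReal⁻¹ * ((μ A).toReal * I) := by
        exact mul_le_mul_of_nonneg_left hkey (by positivity)
    _ = I := by field_simp
end

section
/- Let v, b, b_0 be mutually independent real-valued random variables with v ≥ 0 integrable. Define g(u) = E[v | v + b = u] and h(u) = Pr[b_0 ≤ u], both non-decreasing in u. Then for any threshold U with Pr[v + b ≤ U] > 0, E[v · Pr_{b_0}[b_0 ≤ v + b] | v + b ≤ U] ≤ E[v · Pr_{b_0}[b_0 ≤ v + b]]. -/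
open MeasureTheory ProbabilityTheory

/-- Chebyshev's correlation inequality: identity monovaries with itself, `q` antitone. -/
lemma cheb_aux (ν : Measure ℝ) [IsProbabilityMeasure ν]
    (q : ℝ → ℝ) (hq : Antitone q) (hq0 : ∀ x, 0 ≤ q x) (hq1 : ∀ x, q x ≤ 1)
    (hint : Integrable (fun x : ℝ => x) ν) :
    ∫ x, x * q x ∂ν ≤ (∫ x, x ∂ν) * ∫ x, q x ∂ν := by
  have hqm : Measurable q := hq.measurable
  have hqint : Integrable q ν := by
    refine Integrable.mono (integrable_const (1 : ℝ)) hqm.aestronglyMeasurable ?_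
    filter_upwards with x
    simp only [Real.norm_eq_abs, abs_of_nonneg (hq0 x), norm_one]
    exact hq1 x
  have hxq : Integrable (fun x => x * q x) ν := by
    refine Integrable.mono hint ((measurable_id.mul hqm).aestronglyMeasurable) ?_
    filter_upwards with x
    simp only [Real.norm_eq_abs, abs_mul]
    calc |x| * |q x| ≤ |x| * 1 := by
          exact mul_le_mul_of_nonneg_left (by rw [abs_of_nonneg (hq0 x)]; exact hq1 x)
            (abs_nonneg x)
      _ = |x| := mul_one _
  have i1 : Integrable (fun z : ℝ × ℝ => z.1 * q z.2) (ν.prod ν) := hint.mul_prod hqint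
  have i2 : Integrable (fun z : ℝ × ℝ => z.2 * q z.1) (ν.prod ν) := by
    have := hqint.mul_prod hint
    simpa [mul_comm] using this
  have i3 : Integrable (fun z : ℝ × ℝ => z.1 * q z.1) (ν.prod ν) := by
    have := hxq.mul_prod (show Integrable (fun _ : ℝ => (1 : ℝ)) ν from integrable_const 1)
    simpa using this
  have i4 : Integrable (fun z : ℝ × ℝ => z.2 * q z.2) (ν.prod ν) := by
    have := (show Integrable (fun _ : ℝ => (1 : ℝ)) ν from integrable_const 1).mul_prod hxq
    simpa using this
  have key : 0 ≤ ∫ z : ℝ × ℝ, (z.1 - z.2) * (q z.2 - q z.1) ∂(ν.prod ν) := by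
    refine integral_nonneg fun z => ?_
    show (0 : ℝ) ≤ (z.1 - z.2) * (q z.2 - q z.1)
    rcases le_total z.1 z.2 with h | h
    · nlinarith [hq h]
    · nlinarith [hq h]
  have expand : (fun z : ℝ × ℝ => (z.1 - z.2) * (q z.2 - q z.1)) =
      fun z : ℝ × ℝ => z.1 * q z.2 - z.1 * q z.1 - z.2 * q z.2 + z.2 * q z.1 := by
    funext z; ring
  have i13 : Integrable (fun z : ℝ × ℝ => z.1 * q z.2 - z.1 * q z.1) (ν.prod ν) := i1.sub i3
  have i134 : Integrable (fun z : ℝ × ℝ => z.1 * q z.2 - z.1 * q z.1 - z.2 * q z.2)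
      (ν.prod ν) := i13.sub i4
  rw [expand, integral_add i134 i2, integral_sub i13 i4, integral_sub i1 i3] at key
  have e1 : ∫ z : ℝ × ℝ, z.1 * q z.2 ∂(ν.prod ν) = (∫ x, x ∂ν) * ∫ x, q x ∂ν :=
    integral_prod_mul (μ := ν) (ν := ν) (fun x => x) q
  have e2 : ∫ z : ℝ × ℝ, z.2 * q z.1 ∂(ν.prod ν) = (∫ x, q x ∂ν) * ∫ x, x ∂ν := by
    have := integral_prod_mul (μ := ν) (ν := ν) q (fun x => x)
    simpa [mul_comm] using this
  have e3 : ∫ z : ℝ × ℝ, z.1 * q z.1 ∂(ν.prod ν) = ∫ x, x * q x ∂ν := by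
    have := integral_prod_mul (μ := ν) (ν := ν) (fun x => x * q x) (fun _ => (1 : ℝ))
    simpa using this
  have e4 : ∫ z : ℝ × ℝ, z.2 * q z.2 ∂(ν.prod ν) = ∫ x, x * q x ∂ν := by
    have := integral_prod_mul (μ := ν) (ν := ν) (fun _ => (1 : ℝ)) (fun x => x * q x)
    simpa using this
  rw [e1, e2, e3, e4] at key
  nlinarith [key]

/-- For mutually independent `v, b, b₀` with `v ≥ 0` integrable, and `F₀`
the CDF of `b₀`, for any threshold `U` with `Pr[v + b ≤ U] > 0`,
`E[v · F₀(v + b) | v + b ≤ U] ≤ E[v · F₀(v + b)]`. -/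
theorem outside_option_local_alignment
    {Ω : Type*} [MeasurableSpace Ω] (μ : Measure Ω) [IsProbabilityMeasure μ]
    (X : Fin 3 → Ω → ℝ) (hX : ∀ i, Measurable (X i))
    (hindep : iIndepFun X μ)
    (v b b₀ : Ω → ℝ) (hv : v = X 0) (hb : b = X 1) (hb₀ : b₀ = X 2)
    (hvnn : ∀ ω, 0 ≤ v ω) (hvint : Integrable v μ)
    (F₀ : ℝ → ℝ) (hF₀ : F₀ = fun x => (μ {ω | b₀ ω ≤ x}).toReal)
    (U : ℝ) (hpos : μ {ω | v ω + b ω ≤ U} ≠ 0) :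
    (∫ ω, v ω * F₀ (v ω + b ω) ∂(μ[|{ω | v ω + b ω ≤ U}])) ≤
      ∫ ω, v ω * F₀ (v ω + b ω) ∂μ := by
  have hvm : Measurable v := hv ▸ hX 0
  have hbm : Measurable b := hb ▸ hX 1
  have hb₀m : Measurable b₀ := hb₀ ▸ hX 2
  set A : Set Ω := {ω | v ω + b ω ≤ U} with hA_def
  have hSm : Measurable fun ω => v ω + b ω := hvm.add hbm
  have hA : MeasurableSet A := measurableSet_le hSm measurable_const
  -- properties of F₀
  have hF₀mono : Monotone F₀ := by
    intro x y hxy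
    rw [hF₀]
    exact ENNReal.toReal_mono (measure_ne_top μ _)
      (measure_mono fun ω hω => le_trans hω hxy)
  have hF₀0 : ∀ x, 0 ≤ F₀ x := fun x => by rw [hF₀]; exact ENNReal.toReal_nonneg
  have hF₀1 : ∀ x, F₀ x ≤ 1 := fun x => by
    rw [hF₀]
    exact ENNReal.toReal_le_of_le_ofReal one_pos.le (by simpa using prob_le_one)
  have hF₀meas : Measurable F₀ := hF₀mono.measurable
  -- the integrand
  set g : Ω → ℝ := fun ω => v ω * F₀ (v ω + b ω) with hg_def
  have hgm : Measurable g := hvm.mul (hF₀meas.comp hSm)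
  have hgint : Integrable g μ := by
    refine Integrable.mono hvint hgm.aestronglyMeasurable ?_
    filter_upwards with ω
    simp only [hg_def, Real.norm_eq_abs, abs_mul]
    calc |v ω| * |F₀ (v ω + b ω)| ≤ |v ω| * 1 :=
          mul_le_mul_of_nonneg_left
            (by rw [abs_of_nonneg (hF₀0 _)]; exact hF₀1 _) (abs_nonneg _)
      _ = |v ω| := mul_one _
  have hgnn : ∀ ω, 0 ≤ g ω := fun ω => mul_nonneg (hvnn ω) (hF₀0 _)
  -- basic quantities
  set a : ℝ := (μ A).toReal with ha_def
  have ha0 : 0 < a := ENNReal.toReal_pos hpos (measure_ne_top μ A)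
  have ha1 : a ≤ 1 := by
    rw [ha_def]
    exact ENNReal.toReal_le_of_le_ofReal one_pos.le (by simpa using prob_le_one)
  set c : ℝ := F₀ U with hc_def
  have hc0 : 0 ≤ c := hF₀0 U
  set I : ℝ := ∫ ω in A, g ω ∂μ with hI_def
  set I' : ℝ := ∫ ω in Aᶜ, g ω ∂μ with hI'_def
  set K : ℝ := ∫ ω in A, v ω ∂μ with hK_def
  set K' : ℝ := ∫ ω in Aᶜ, v ω ∂μ with hK'_def
  set L : ℝ := ∫ ω, v ω ∂μ with hL_def
  set J : ℝ := ∫ ω, g ω ∂μ with hJ_def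
  have hI0 : 0 ≤ I := setIntegral_nonneg hA fun ω _ => hgnn ω
  have hK'0 : 0 ≤ K' := setIntegral_nonneg hA.compl fun ω _ => hvnn ω
  have hJsplit : I + I' = J := integral_add_compl hA hgint
  have hLsplit : K + K' = L := integral_add_compl hA hvint
  -- (i) I ≤ c * K
  have hIK : I ≤ c * K := by
    have h : I ≤ ∫ ω in A, v ω * c ∂μ := by
      refine setIntegral_mono_on hgint.integrableOn (hvint.mul_const c).integrableOn hA ?_
      intro ω hω
      exact mul_le_mul_of_nonneg_left (hF₀mono hω) (hvnn ω)
    rw [integral_mul_const] at h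
    linarith [h, mul_comm K c]
  -- (ii) c * K' ≤ I'
  have hI'c : c * K' ≤ I' := by
    have h : (∫ ω in Aᶜ, v ω * c ∂μ) ≤ I' := by
      refine setIntegral_mono_on (hvint.mul_const c).integrableOn hgint.integrableOn
        hA.compl ?_
      intro ω hω
      have hU : U ≤ v ω + b ω := le_of_not_ge hω
      exact mul_le_mul_of_nonneg_left (hF₀mono hU) (hvnn ω)
    rw [integral_mul_const] at h
    linarith [h, mul_comm K' c]
  -- (iii) K ≤ L * a  (Chebyshev via independence)
  have hKa : K ≤ L * a := by
    set ν : Measure ℝ := μ.map v with hν_def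
    set ρ : Measure ℝ := μ.map b with hρ_def
    have : IsProbabilityMeasure ν := Measure.isProbabilityMeasure_map hvm.aemeasurable
    have : IsProbabilityMeasure ρ := Measure.isProbabilityMeasure_map hbm.aemeasurable
    have hiv : IndepFun v b μ := by
      rw [hv, hb]
      exact hindep.indepFun (by decide : (0 : Fin 3) ≠ 1)
    have hmap : μ.map (fun ω => (v ω, b ω)) = ν.prod ρ :=
      (indepFun_iff_map_prod_eq_prod_map_map hvm.aemeasurable hbm.aemeasurable).mp hiv
    set q : ℝ → ℝ := fun x => (ρ (Set.Iic (U - x))).toReal with hq_def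
    have hq : Antitone q := by
      intro x y hxy
      rw [hq_def]
      exact ENNReal.toReal_mono (measure_ne_top ρ _)
        (measure_mono (Set.Iic_subset_Iic.mpr (by linarith)))
    have hq0 : ∀ x, 0 ≤ q x := fun x => ENNReal.toReal_nonneg
    have hq1 : ∀ x, q x ≤ 1 := fun x => by
      rw [hq_def]
      exact ENNReal.toReal_le_of_le_ofReal one_pos.le (by simpa using prob_le_one)
    have hidν : Integrable (fun x : ℝ => x) ν := by
      rw [hν_def]
      exact (integrable_map_measure measurable_id.aestronglyMeasurable
        hvm.aemeasurable).mpr hvint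
    -- the measurable set in the plane
    set T : Set (ℝ × ℝ) := {p : ℝ × ℝ | p.1 + p.2 ≤ U} with hT_def
    have hT : MeasurableSet T := measurableSet_le (measurable_fst.add measurable_snd)
      measurable_const
    -- φ is the indicator of T with value fst
    set φ : ℝ × ℝ → ℝ := T.indicator (fun p => p.1) with hφ_def
    have hφm : Measurable φ := measurable_fst.indicator hT
    have hφint : Integrable φ (ν.prod ρ) := by
      have hfst : Integrable (fun p : ℝ × ℝ => p.1) (ν.prod ρ) := by
        have := hidν.mul_prod (show Integrable (fun _ : ℝ => (1 : ℝ)) ρ from integrable_const 1)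
        simpa using this
      refine Integrable.mono hfst hφm.aestronglyMeasurable ?_
      filter_upwards with p
      rw [hφ_def]
      by_cases hp : p ∈ T
      · rw [Set.indicator_of_mem hp]
      · rw [Set.indicator_of_notMem hp]; simp
    -- ψ is the indicator of T with value 1
    set ψ : ℝ × ℝ → ℝ := T.indicator (fun _ => (1 : ℝ)) with hψ_def
    have hψm : Measurable ψ := (measurable_const).indicator hT
    have hψint : Integrable ψ (ν.prod ρ) := by
      refine Integrable.mono (integrable_const (1 : ℝ)) hψm.aestronglyMeasurable ?_
      filter_upwards with p
      by_cases hp : p ∈ T <;>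
        simp [hψ_def, Set.indicator_apply, hp]
    -- inner integrals
    have hinnerφ : ∀ x : ℝ, (∫ y, φ (x, y) ∂ρ) = x * q x := by
      intro x
      have hfun : (fun y => φ (x, y)) = (Set.Iic (U - x)).indicator (fun _ => x) := by
        funext y
        by_cases h : x + y ≤ U
        · have h1 : (x, y) ∈ T := h
          have h2 : y ∈ Set.Iic (U - x) := by simp only [Set.mem_Iic]; linarith
          simp [hφ_def, Set.indicator_apply, h1, h2]
        · have h1 : (x, y) ∉ T := h
          have h2 : y ∉ Set.Iic (U - x) := by
            simp only [Set.mem_Iic]; intro hy; exact h (by linarith)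
          simp [hφ_def, Set.indicator_apply, h1, h2]
      rw [hfun, integral_indicator_const _ measurableSet_Iic, hq_def, smul_eq_mul, mul_comm]; rfl
    have hinnerψ : ∀ x : ℝ, (∫ y, ψ (x, y) ∂ρ) = q x := by
      intro x
      have hfun : (fun y => ψ (x, y)) = (Set.Iic (U - x)).indicator (fun _ => (1 : ℝ)) := by
        funext y
        by_cases h : x + y ≤ U
        · have h1 : (x, y) ∈ T := h
          have h2 : y ∈ Set.Iic (U - x) := by simp only [Set.mem_Iic]; linarith
          simp [hψ_def, Set.indicator_apply, h1, h2]
        · have h1 : (x, y) ∉ T := h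
          have h2 : y ∉ Set.Iic (U - x) := by
            simp only [Set.mem_Iic]; intro hy; exact h (by linarith)
          simp [hψ_def, Set.indicator_apply, h1, h2]
      rw [hfun, integral_indicator_const _ measurableSet_Iic, hq_def, smul_eq_mul, mul_one]; rfl
    -- K as an integral over ν
    have hKν : K = ∫ x, x * q x ∂ν := by
      have h1 : K = ∫ ω, φ (v ω, b ω) ∂μ := by
        rw [hK_def, ← integral_indicator hA]
        refine integral_congr_ae (Filter.Eventually.of_forall fun ω => ?_)
        by_cases hω : ω ∈ A
        · have h1 : (v ω, b ω) ∈ T := hω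
          simp [hφ_def, Set.indicator_apply, hω, h1]
        · have h1 : (v ω, b ω) ∉ T := hω
          simp [hφ_def, Set.indicator_apply, hω, h1]
      have h2 : (∫ ω, φ (v ω, b ω) ∂μ) = ∫ p, φ p ∂(ν.prod ρ) := by
        rw [← hmap, integral_map (hvm.prodMk hbm).aemeasurable
          (by rw [hmap]; exact hφm.aestronglyMeasurable)]
      rw [h1, h2, integral_prod _ hφint]
      exact integral_congr_ae (Filter.Eventually.of_forall fun x => hinnerφ x)
    -- a as an integral over ν
    have haν : a = ∫ x, q x ∂ν := by
      have h1 : a = ∫ ω, ψ (v ω, b ω) ∂μ := by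
        have hfun : (fun ω => ψ (v ω, b ω)) = A.indicator (fun _ => (1 : ℝ)) := by
          funext ω
          by_cases hω : ω ∈ A
          · have h1 : (v ω, b ω) ∈ T := hω
            simp [hψ_def, Set.indicator_apply, hω, h1]
          · have h1 : (v ω, b ω) ∉ T := hω
            simp [hψ_def, Set.indicator_apply, hω, h1]
        rw [hfun, integral_indicator_const _ hA, smul_eq_mul, mul_one, ha_def]; rfl
      have h2 : (∫ ω, ψ (v ω, b ω) ∂μ) = ∫ p, ψ p ∂(ν.prod ρ) := by
        rw [← hmap, integral_map (hvm.prodMk hbm).aemeasurable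
          (by rw [hmap]; exact hψm.aestronglyMeasurable)]
      rw [h1, h2, integral_prod _ hψint]
      exact integral_congr_ae (Filter.Eventually.of_forall fun x => hinnerψ x)
    have hLν : L = ∫ x, x ∂ν := by
      rw [hL_def, hν_def]
      exact (integral_map hvm.aemeasurable aestronglyMeasurable_id).symm
    rw [hKν, haν, hLν]
    exact cheb_aux ν q hq hq0 hq1 hidν
  -- put everything together
  have hcond : (∫ ω, v ω * F₀ (v ω + b ω) ∂(μ[|A])) = a⁻¹ * I := by
    rw [ProbabilityTheory.cond, integral_smul_measure, smul_eq_mul, ENNReal.toReal_inv]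
  have hgoal : I ≤ a * J := by
    rw [← hLsplit] at hKa
    have h2 : (1 - a) * I ≤ (1 - a) * (c * K) :=
      mul_le_mul_of_nonneg_left hIK (by linarith)
    have h3 : c * K ≤ c * ((K + K') * a) := mul_le_mul_of_nonneg_left hKa hc0
    have h4 : a * (c * K') ≤ a * I' := mul_le_mul_of_nonneg_left hI'c ha0.le
    rw [← hJsplit]
    nlinarith [h2, h3, h4]
  calc (∫ ω, v ω * F₀ (v ω + b ω) ∂(μ[|A])) = a⁻¹ * I := hcond
    _ ≤ a⁻¹ * (a * J) := mul_le_mul_of_nonneg_left hgoal (inv_nonneg.mpr ha0.le)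
    _ = J := by field_simp
end

section
/- Local-to-global utility alignment, single-action case: suppose pairs (A_i, P_i) for i = 1,...,n are independent, P_i ≥ 0, each action is locally f(q)-utility aligned (for every i and every threshold U with Pr[A_i ≤ U] = q > 0, E[P_i | A_i ≤ U] ≤ f(q)·E[P_i], with f non-increasing). Let i* = argmax_i A_i, U a threshold with Pr[A_{i*} ≤ U] = q, and X = E[P_{i*} | A_{i*} ≤ U]. If some fixed index i satisfies E[P_{i*} · 1[i* = i] | A_{i*} ≤ U] ≥ X/4, then E[P_i] ≥ X/(4·f(q)). -/
open MeasureTheory ProbabilityTheory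

/-- Local-to-global utility alignment, single-action case. With independent
pairs `(A i, P i)`, `P i ≥ 0`, local `f(q)`-utility alignment of every action, and
`i* = argmax A`, if `X = E[P_{i*} | A_{i*} ≤ U]`, `q = Pr[A_{i*} ≤ U] > 0`, and some fixed
`i` satisfies `E[P_{i*}·1[i* = i] | A_{i*} ≤ U] ≥ X/4`, then `E[P i] ≥ X/(4·f(q))`. -/
theorem local_to_global_single_action
    {Ω : Type*} [MeasurableSpace Ω] (μ : Measure Ω) [IsProbabilityMeasure μ]
    (n : ℕ) [NeZero n]
    (A P : Fin n → Ω → ℝ)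
    (hA : ∀ i, Measurable (A i)) (hP : ∀ i, Measurable (P i))
    (hPnn : ∀ i ω, 0 ≤ P i ω) (hPint : ∀ i, Integrable (P i) μ)
    (hindep : iIndepFun (fun i ω => (A i ω, P i ω)) μ)
    (f : ℝ → ℝ) (hf : AntitoneOn f (Set.Ioc (0 : ℝ) 1))
    (hfpos : ∀ q ∈ Set.Ioc (0 : ℝ) 1, 0 < f q)
    (hlocal : ∀ i (U q : ℝ), (μ {ω | A i ω ≤ U}).toReal = q → 0 < q →
      (∫ ω, P i ω ∂(μ[|{ω | A i ω ≤ U}])) ≤ f q * ∫ ω, P i ω ∂μ)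
    (istar : Ω → Fin n) (histar_meas : Measurable istar)
    (histar : ∀ ω i, A i ω ≤ A (istar ω) ω)
    (hnoties : ∀ᵐ ω ∂μ, ∀ i j, i ≠ j → A i ω ≠ A j ω)
    (U q : ℝ) (hq : (μ {ω | A (istar ω) ω ≤ U}).toReal = q) (hqpos : 0 < q)
    (X : ℝ)
    (hX : X = ∫ ω, P (istar ω) ω ∂(μ[|{ω | A (istar ω) ω ≤ U}]))
    (i : Fin n)
    (hi : X / 4 ≤ ∫ ω, (if istar ω = i then P (istar ω) ω else 0)
      ∂(μ[|{ω | A (istar ω) ω ≤ U}])) :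
    X / (4 * f q) ≤ ∫ ω, P i ω ∂μ := by
  classical
  set T : Set Ω := {ω | A i ω ≤ U} with hTdef
  set R : Set Ω := {ω | ∀ j, j ≠ i → A j ω ≤ U} with hRdef
  set S : Set Ω := {ω | A (istar ω) ω ≤ U} with hSdef
  have hTmeas : MeasurableSet T := measurableSet_le (hA i) measurable_const
  have hRmeas : MeasurableSet R := by
    have : R = ⋂ j, {ω | j ≠ i → A j ω ≤ U} := by ext ω; simp [hRdef]
    rw [this]
    refine MeasurableSet.iInter fun j => ?_
    by_cases hj : j = i
    · simp [hj]
    · simpa [hj] using measurableSet_le (hA j) (measurable_const : Measurable fun _ : Ω => U)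
  have hSTR : S = T ∩ R := by
    ext ω
    constructor
    · intro h
      exact ⟨le_trans (histar ω i) h, fun j _ => le_trans (histar ω j) h⟩
    · rintro ⟨h1, h2⟩
      by_cases hji : istar ω = i
      · show A (istar ω) ω ≤ U
        rw [hji]; exact h1
      · exact h2 _ hji
  -- independence of the i-th pair and the rest
  have hFmeas : ∀ j, Measurable (fun ω => (A j ω, P j ω)) := fun j => (hA j).prodMk (hP j)
  have hdisj : Disjoint ({i} : Finset (Fin n)) ({i}ᶜ) := disjoint_compl_right
  have hind2 := hindep.indepFun_finset {i} ({i}ᶜ) hdisj hFmeas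
  have hki : i ∈ ({i} : Finset (Fin n)) := Finset.mem_singleton_self i
  -- the two measurable maps on the tuple spaces
  set sg : Set ({x // x ∈ ({i} : Finset (Fin n))} → ℝ × ℝ) :=
    {v | (v ⟨i, hki⟩).1 ≤ U} with hsgdef
  set sh : Set ({x // x ∈ (({i} : Finset (Fin n))ᶜ : Finset (Fin n))} → ℝ × ℝ) :=
    {v | ∀ j, (v j).1 ≤ U} with hshdef
  have hsg : MeasurableSet sg :=
    measurableSet_le ((measurable_pi_apply _).fst) measurable_const
  have hsh : MeasurableSet sh := by
    have : sh = ⋂ j, {v | (v j).1 ≤ U} := by ext v; simp [hshdef]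
    rw [this]
    exact MeasurableSet.iInter fun j =>
      measurableSet_le ((measurable_pi_apply _).fst) measurable_const
  -- preimage identification
  have hpreT : (fun ω (j : {x // x ∈ ({i} : Finset (Fin n))}) => (A j.1 ω, P j.1 ω)) ⁻¹' sg
      = T := by
    ext ω; simp [hsgdef, hTdef]
  have hpreR : (fun ω (j : {x // x ∈ (({i} : Finset (Fin n))ᶜ : Finset (Fin n))}) =>
      (A j.1 ω, P j.1 ω)) ⁻¹' sh = R := by
    ext ω
    simp only [Set.mem_preimage, hshdef, Set.mem_setOf_eq, hRdef]
    constructor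
    · intro h j hj
      exact h ⟨j, by simpa [Finset.mem_compl] using hj⟩
    · intro h j
      exact h j.1 (Finset.notMem_singleton.mp (Finset.mem_compl.mp j.2))
  -- measures multiply
  have hmul : μ S = μ T * μ R := by
    rw [hSTR, ← hpreT, ← hpreR]
    exact hind2.measure_inter_preimage_eq_mul sg sh hsg hsh
  set qT : ℝ := (μ T).toReal with hqTdef
  set qR : ℝ := (μ R).toReal with hqRdef
  have hqmul : q = qT * qR := by
    rw [← hq]
    show (μ S).toReal = qT * qR
    rw [hmul, ENNReal.toReal_mul]
  have hqTnn : 0 ≤ qT := ENNReal.toReal_nonneg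
  have hqRnn : 0 ≤ qR := ENNReal.toReal_nonneg
  have hqTpos : 0 < qT := by
    rcases hqTnn.lt_or_eq with h | h
    · exact h
    · exfalso; rw [hqmul, ← h] at hqpos; simp at hqpos
  have hqRpos : 0 < qR := by
    rcases hqRnn.lt_or_eq with h | h
    · exact h
    · exfalso; rw [hqmul, ← h] at hqpos; simp at hqpos
  have hqR1 : qR ≤ 1 := by
    rw [hqRdef]
    exact ENNReal.toReal_le_of_le_ofReal one_pos.le (by simpa using prob_le_one (μ := μ) (s := R))
  have hqT1 : qT ≤ 1 := by
    rw [hqTdef]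
    exact ENNReal.toReal_le_of_le_ofReal one_pos.le (by simpa using prob_le_one (μ := μ) (s := T))
  have hqleqT : q ≤ qT := by
    calc q = qT * qR := hqmul
    _ ≤ qT * 1 := by nlinarith
    _ = qT := mul_one qT
  -- independence of the relevant real functions
  have hgh : IndepFun (T.indicator (P i)) (R.indicator fun _ => (1 : ℝ)) μ := by
    have hφg : Measurable (fun v : {x // x ∈ ({i} : Finset (Fin n))} → ℝ × ℝ =>
        if (v ⟨i, hki⟩).1 ≤ U then (v ⟨i, hki⟩).2 else 0) :=
      Measurable.ite hsg ((measurable_pi_apply _).snd) measurable_const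
    have hφh : Measurable (fun v : {x // x ∈ (({i} : Finset (Fin n))ᶜ : Finset (Fin n))} → ℝ × ℝ =>
        if ∀ j, (v j).1 ≤ U then (1 : ℝ) else 0) :=
      Measurable.ite hsh measurable_const measurable_const
    have h := hind2.comp hφg hφh
    have e1 : ((fun v : {x // x ∈ ({i} : Finset (Fin n))} → ℝ × ℝ =>
        if (v ⟨i, hki⟩).1 ≤ U then (v ⟨i, hki⟩).2 else 0) ∘
        fun a (j : {x // x ∈ ({i} : Finset (Fin n))}) => (A j.1 a, P j.1 a))
        = T.indicator (P i) := by
      funext ω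
      simp only [Function.comp, Set.indicator_apply, hTdef, Set.mem_setOf_eq]
    have e2 : ((fun v : {x // x ∈ (({i} : Finset (Fin n))ᶜ : Finset (Fin n))} → ℝ × ℝ =>
        if ∀ j, (v j).1 ≤ U then (1 : ℝ) else 0) ∘
        fun a (j : {x // x ∈ (({i} : Finset (Fin n))ᶜ : Finset (Fin n))}) =>
          (A j.1 a, P j.1 a)) = R.indicator fun _ => (1 : ℝ) := by
      funext ω
      simp only [Function.comp, Set.indicator_apply]
      by_cases h2 : ω ∈ R
      · have hall : ∀ j : {x // x ∈ (({i} : Finset (Fin n))ᶜ : Finset (Fin n))}, (A j.1 ω) ≤ U :=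
          fun j => h2 j.1 (Finset.notMem_singleton.mp (Finset.mem_compl.mp j.2))
        rw [if_pos hall, if_pos h2]
      · have hnall : ¬ ∀ j : {x // x ∈ (({i} : Finset (Fin n))ᶜ : Finset (Fin n))},
            (A j.1 ω) ≤ U := fun hall => h2 (fun j hj =>
          hall ⟨j, Finset.mem_compl.mpr (Finset.notMem_singleton.mpr hj)⟩)
        rw [if_neg hnall, if_neg h2]
    rw [e1, e2] at h
    exact h
  have hgInt : Integrable (T.indicator (P i)) μ := (hPint i).indicator hTmeas
  have hhInt : Integrable (R.indicator fun _ => (1 : ℝ)) μ :=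
    (integrable_const (1 : ℝ)).indicator hRmeas
  have hIntMul := hgh.integral_mul_eq_mul_integral hgInt.aestronglyMeasurable hhInt.aestronglyMeasurable
  -- identify the product with the indicator of S
  have hprodeq : (T.indicator (P i)) * (R.indicator fun _ => (1 : ℝ)) = S.indicator (P i) := by
    funext ω
    rw [hSTR]
    simp only [Pi.mul_apply, Set.indicator_apply, Set.mem_inter_iff]
    by_cases h1 : ω ∈ T <;> by_cases h2 : ω ∈ R <;> simp [h1, h2]
  rw [hprodeq] at hIntMul
  have hIndR : ∫ ω, (R.indicator fun _ => (1 : ℝ)) ω ∂μ = qR := by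
    rw [integral_indicator_const (1 : ℝ) hRmeas]; simp [hqRdef, measureReal_def]
  rw [hIndR] at hIntMul
  -- hIntMul : ∫ S.indicator (P i) = (∫ T.indicator (P i)) * qR
  have hSmeas : MeasurableSet S := hSTR ▸ hTmeas.inter hRmeas
  have hμSne : μ S ≠ 0 := by
    intro h
    rw [← hq] at hqpos
    show False
    rw [show (μ {ω | A (istar ω) ω ≤ U}) = μ S from rfl, h] at hqpos
    simp at hqpos
  have hμSfin : μ S ≠ ⊤ := measure_ne_top μ S
  have hμTne : μ T ≠ 0 := by
    intro h
    rw [hqTdef, h] at hqTpos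
    simp at hqTpos
  -- conditional integrals as restricted integrals
  have hcondS : ∀ g : Ω → ℝ, ∫ ω, g ω ∂(μ[|S]) = q⁻¹ * ∫ ω in S, g ω ∂μ := by
    intro g
    rw [ProbabilityTheory.cond, integral_smul_measure, ENNReal.toReal_inv, smul_eq_mul, ← hq]
  have hcondT : ∀ g : Ω → ℝ, ∫ ω, g ω ∂(μ[|T]) = qT⁻¹ * ∫ ω in T, g ω ∂μ := by
    intro g
    rw [ProbabilityTheory.cond, integral_smul_measure, ENNReal.toReal_inv, smul_eq_mul, hqTdef]
  -- Step: X/4 ≤ ∫ P i ∂(μ[|S])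
  have hPiCondInt : Integrable (P i) (μ[|S]) := by
    rw [ProbabilityTheory.cond]
    exact ((hPint i).restrict).smul_measure (by simp [hμSne])
  have hind_eq : (∫ ω, (if istar ω = i then P (istar ω) ω else 0) ∂(μ[|S]))
      = ∫ ω, ({ω | istar ω = i}.indicator (P i)) ω ∂(μ[|S]) := by
    refine integral_congr_ae (Filter.Eventually.of_forall fun ω => ?_)
    simp only [Set.indicator_apply, Set.mem_setOf_eq]
    by_cases h : istar ω = i
    · simp [h]
    · simp [h]
  have hindCondInt : Integrable ({ω | istar ω = i}.indicator (P i)) (μ[|S]) :=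
    hPiCondInt.indicator (histar_meas (measurableSet_singleton i))
  have hstep1 : X / 4 ≤ ∫ ω, P i ω ∂(μ[|S]) := by
    refine le_trans (hi.trans_eq hind_eq) ?_
    refine integral_mono hindCondInt hPiCondInt fun ω => ?_
    exact Set.indicator_le_self' (fun x _ => hPnn i x) ω
  -- Step: ∫ P i ∂(μ[|S]) = ∫ P i ∂(μ[|T])
  have hstep2 : ∫ ω, P i ω ∂(μ[|S]) = ∫ ω, P i ω ∂(μ[|T]) := by
    rw [hcondS, hcondT, ← integral_indicator hSmeas, ← integral_indicator hTmeas, hIntMul]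
    rw [hqmul]
    field_simp
  -- local alignment at threshold U for action i
  have hlocalT : (∫ ω, P i ω ∂(μ[|T])) ≤ f qT * ∫ ω, P i ω ∂μ :=
    hlocal i U qT rfl hqTpos
  have hfmono : f qT ≤ f q :=
    hf ⟨hqpos, le_trans hqleqT hqT1⟩ ⟨hqTpos, hqT1⟩ hqleqT
  have hEnn : 0 ≤ ∫ ω, P i ω ∂μ := integral_nonneg (hPnn i)
  have hfq : 0 < f q := hfpos q ⟨hqpos, le_trans hqleqT hqT1⟩
  have hchain : X / 4 ≤ f q * ∫ ω, P i ω ∂μ := by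
    calc X / 4 ≤ ∫ ω, P i ω ∂(μ[|S]) := hstep1
    _ = ∫ ω, P i ω ∂(μ[|T]) := hstep2
    _ ≤ f qT * ∫ ω, P i ω ∂μ := hlocalT
    _ ≤ f q * ∫ ω, P i ω ∂μ := by nlinarith
  rw [div_le_iff₀ (by positivity)]
  nlinarith
end

section
/- Approximation-ratio computation for √-aligned instances: for integer M ≥ 36 and constant c > 0, with r_j = c·√(M/j), the quantity α(M) = ((M−1)/(M+1)) · ((M−5)/(M−1) − (c√M)/(6(M−1)) − (5c√M/(M−1))·Σ_{j=6}^{M} 1/((j−1)√j)) satisfies α(M) ≥ 1 − C/√M for a constant C depending only on c. In particular, the series Σ_{j=6}^{∞} 1/((j−1)√j) converges. -/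
lemma term_nonneg (n : ℕ) : 0 ≤ 1 / (((n : ℝ) - 1) * Real.sqrt n) := by
  rcases n with _ | m
  · simp
  · apply div_nonneg zero_le_one
    apply mul_nonneg _ (Real.sqrt_nonneg _)
    have : (1 : ℝ) ≤ ((m + 1 : ℕ) : ℝ) := by
      push_cast; linarith [Nat.cast_nonneg (α := ℝ) m]
    linarith

lemma term_summable : Summable (fun j : ℕ => 1 / (((j : ℝ) - 1) * Real.sqrt j)) := by
  have h2 : Summable (fun n : ℕ => 2 * (1 / (n : ℝ) ^ ((3 : ℝ) / 2))) :=
    (Real.summable_one_div_nat_rpow.mpr (by norm_num)).mul_left 2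
  refine h2.of_nonneg_of_le (fun n => term_nonneg n) ?_
  intro n
  match n with
  | 0 => simp
  | 1 => norm_num
  | (m + 2) =>
    set n := m + 2 with hn
    have hn2 : (2 : ℝ) ≤ (n : ℝ) := by
      push_cast [hn]; linarith [Nat.cast_nonneg (α := ℝ) m]
    have hx : (1 : ℝ) ≤ Real.sqrt n := by
      rw [show (1:ℝ) = Real.sqrt 1 by simp]
      exact Real.sqrt_le_sqrt (by linarith)
    have hr : ((n : ℝ)) ^ ((3 : ℝ) / 2) = (n : ℝ) * Real.sqrt n := by
      rw [show (3 : ℝ) / 2 = 1 + 1 / 2 by norm_num,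
        Real.rpow_add' (Nat.cast_nonneg n) (by norm_num), Real.rpow_one,
        ← Real.sqrt_eq_rpow]
    rw [hr, mul_one_div]
    rw [div_le_div_iff₀ (by nlinarith) (by nlinarith)]
    nlinarith [Real.sqrt_nonneg (n : ℝ)]

/-- For integer `M ≥ 36` and constant `c > 0`, with `r_j = c·√(M/j)`, the
approximation ratio
`α(M) = ((M−1)/(M+1))·((M−5)/(M−1) − c√M/(6(M−1)) − (5c√M/(M−1))·Σ_{j=6}^{M} 1/((j−1)√j))`
satisfies `α(M) ≥ 1 − C/√M` for a constant `C` depending only on `c`; moreover the series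
`Σ_j 1/((j−1)√j)` converges. -/
theorem sqrt_aligned_approximation_ratio (c : ℝ) (hc : 0 < c) :
    (∃ C : ℝ, ∀ M : ℕ, 36 ≤ M →
      1 - C / Real.sqrt M ≤
        ((M : ℝ) - 1) / ((M : ℝ) + 1) *
          (((M : ℝ) - 5) / ((M : ℝ) - 1) -
            c * Real.sqrt M / (6 * ((M : ℝ) - 1)) -
            (5 * c * Real.sqrt M / ((M : ℝ) - 1)) *
              ∑ j ∈ Finset.Icc 6 M, 1 / (((j : ℝ) - 1) * Real.sqrt j))) ∧
    Summable (fun j : ℕ => 1 / (((j : ℝ) - 1) * Real.sqrt j)) := by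
  refine ⟨⟨6 + c / 6 + 5 * c * (∑' j : ℕ, 1 / (((j : ℝ) - 1) * Real.sqrt j)), ?_⟩,
    term_summable⟩
  intro M hM
  set T : ℝ := ∑' j : ℕ, 1 / (((j : ℝ) - 1) * Real.sqrt j) with hT
  set S : ℝ := ∑ j ∈ Finset.Icc 6 M, 1 / (((j : ℝ) - 1) * Real.sqrt j) with hS
  have hM36 : (36 : ℝ) ≤ (M : ℝ) := by exact_mod_cast hM
  set s : ℝ := Real.sqrt M with hs
  have hs0 : 0 ≤ s := Real.sqrt_nonneg _
  have hs2 : s ^ 2 = (M : ℝ) := Real.sq_sqrt (by linarith)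
  have hs6 : 6 ≤ s := by nlinarith [sq_nonneg (s - 6)]
  have hST : S ≤ T := Summable.sum_le_tsum _ (fun i _ => term_nonneg i) term_summable
  have hS0 : 0 ≤ S := Finset.sum_nonneg (fun i _ => term_nonneg i)
  have hM1 : (M : ℝ) - 1 ≠ 0 := by linarith
  have hM1' : (0:ℝ) < (M : ℝ) + 1 := by linarith
  have hrw : ((M : ℝ) - 1) / ((M : ℝ) + 1) *
      (((M : ℝ) - 5) / ((M : ℝ) - 1) - c * s / (6 * ((M : ℝ) - 1)) -
        (5 * c * s / ((M : ℝ) - 1)) * S) =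
      (((M : ℝ) - 5) - c * s / 6 - 5 * c * s * S) / ((M : ℝ) + 1) := by
    field_simp
  rw [hrw]
  have hs0' : (0:ℝ) < s := by linarith
  rw [show (1 : ℝ) - (6 + c / 6 + 5 * c * T) / s = (s - (6 + c / 6 + 5 * c * T)) / s by
    field_simp]
  rw [div_le_div_iff₀ hs0' hM1']
  have hT0 : 0 ≤ T := le_trans hS0 hST
  nlinarith [mul_nonneg (mul_nonneg hc.le (sub_nonneg.mpr hST)) (sq_nonneg s),
    mul_nonneg hc.le hT0, mul_nonneg hc.le hS0, sq_nonneg s,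
    mul_nonneg (mul_nonneg hc.le hT0) hs0]
end
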